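/- Let (A, ∘, B) be a quadratic Novikov algebra and I an ideal of (A,∘). Then I^⊥ = {a ∈ A : B(a,b) = 0 for all b ∈ I} is an ideal of (A,∘). -/
import Mathlib


/-- In a quadratic Novikov algebra, the orthogonal complement of an ideal is
an ideal: if a ⊥ I then a∘x ⊥ I and x∘a ⊥ I for every x ∈ A. -/
theorem quadratic_novikov_orthogonal_ideal
    {k A : Type*} [Field k] [CharZero k] [AddCommGroup A] [Module k A]
    (mul : A →ₗ[k] A →ₗ[k] A) (B : LinearMap.BilinForm k A)
    (hnov1 : ∀ a b c, mul (mul a b) c - mul a (mul b c) = mul (mul b a) c - mul b (mul a c))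
    (hnov2 : ∀ a b c, mul (mul a b) c = mul (mul a c) b)
    (hsym : ∀ a b, B a b = B b a)
    (hnd : ∀ a, (∀ b, B a b = 0) → a = 0)
    (hinv : ∀ a b c, B (mul a b) c = -(B b (mul a c + mul c a)))
    (I : Submodule k A)
    (hI : ∀ a ∈ I, ∀ x : A, mul a x ∈ I ∧ mul x a ∈ I) :
    ∀ a : A, (∀ b ∈ I, B a b = 0) →
      ∀ x : A, (∀ b ∈ I, B (mul a x) b = 0) ∧ (∀ b ∈ I, B (mul x a) b = 0) := by
  intro a ha x
  constructor
  · intro b hb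
    calc B (mul a x) b = -(B x (mul a b + mul b a)) := hinv a x b
      _ = -(B x (mul b a + mul a b)) := by rw [add_comm]
      _ = B (mul b x) a := (hinv b x a).symm
      _ = B a (mul b x) := hsym _ _
      _ = 0 := ha _ (hI b hb x).1
  · intro b hb
    rw [hinv x a b, map_add, ha _ (hI b hb x).2, ha _ (hI b hb x).1]
    simp
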